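/- Let F : ℝ^d → ℝ^d satisfy the blockwise Lipschitz assumption with positive semidefinite matrices Q¹,…,Qᵐ over the consecutive blocks S¹,…,Sᵐ, and let L² = ‖∑_{i=1}^m Q̂ⁱ‖. For x, y ∈ ℝ^d, define p ∈ ℝ^d blockwise by pⁱ = Fⁱ(x¹,…,x^{i−1}, yⁱ,…,yᵐ), i.e., pⁱ is the i-th block of F evaluated at the hybrid vector whose first i−1 blocks are those of x and whose blocks i through m are those of y. Then ‖F(x) − p‖² ≤ L² ‖x − y‖². -/

import Mathlib

open scoped RealInnerProductSpace

/-- Operator norm of a square real matrix, viewed as a linear map on Euclidean space. -/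
noncomputable def matOpNorm {d : ℕ} (Q : Matrix (Fin d) (Fin d) ℝ) : ℝ :=
  ‖Matrix.toEuclideanCLM (𝕜 := ℝ) Q‖

/-- The quadratic form `vᵀ Q v` on Euclidean space. -/
noncomputable def quadForm {d : ℕ} (Q : Matrix (Fin d) (Fin d) ℝ)
    (v : EuclideanSpace ℝ (Fin d)) : ℝ :=
  ⟪v, Matrix.toEuclideanCLM (𝕜 := ℝ) Q v⟫

/-!
Split `‖F x − p‖²` into its blocks. On block `i` the two arguments of `F` are `x` and the
hybrid vector `zⁱ`, so the blockwise Lipschitz bound gives `(x − zⁱ)ᵀ Qⁱ (x − zⁱ)`. Since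
`x − zⁱ` is `x − y` with the first `i − 1` blocks zeroed, this equals `(x − y)ᵀ Q̂ⁱ (x − y)`;
summing over `i` yields `(x − y)ᵀ (∑ᵢ Q̂ⁱ) (x − y) ≤ ‖∑ᵢ Q̂ⁱ‖ ‖x − y‖²`.
-/

section QuadForm

variable {d : ℕ}

lemma quadForm_eq_sum (Q : Matrix (Fin d) (Fin d) ℝ) (v : EuclideanSpace ℝ (Fin d)) :
    quadForm Q v = ∑ j, ∑ k, v j * Q j k * v k := by
  have hQv : ∀ j, Matrix.toEuclideanCLM (𝕜 := ℝ) Q v j = ∑ k, Q j k * v k := fun _ => rfl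
  simp only [quadForm, PiLp.inner_apply, RCLike.inner_apply, conj_trivial, hQv, Finset.sum_mul]
  exact Finset.sum_congr rfl fun j _ => Finset.sum_congr rfl fun k _ => by ring

lemma quadForm_le_matOpNorm_mul_norm_sq (Q : Matrix (Fin d) (Fin d) ℝ)
    (v : EuclideanSpace ℝ (Fin d)) : quadForm Q v ≤ matOpNorm Q * ‖v‖ ^ 2 :=
  calc quadForm Q v ≤ ‖v‖ * ‖Matrix.toEuclideanCLM (𝕜 := ℝ) Q v‖ := real_inner_le_norm _ _
    _ ≤ ‖v‖ * (matOpNorm Q * ‖v‖) := by gcongr; exact ContinuousLinearMap.le_opNorm _ _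
    _ = matOpNorm Q * ‖v‖ ^ 2 := by ring

lemma quadForm_sum {ι : Type*} (s : Finset ι) (Q : ι → Matrix (Fin d) (Fin d) ℝ)
    (v : EuclideanSpace ℝ (Fin d)) : quadForm (∑ i ∈ s, Q i) v = ∑ i ∈ s, quadForm (Q i) v := by
  simp only [quadForm, map_sum, sum_apply, inner_sum]

lemma quadForm_restrict (S : Fin d → Prop) [DecidablePred S]
    {Q P : Matrix (Fin d) (Fin d) ℝ} (hP : ∀ j k, P j k = if S j ∧ S k then Q j k else 0)
    {v w : EuclideanSpace ℝ (Fin d)} (hw : ∀ l, w l = if S l then v l else 0) :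
    quadForm Q w = quadForm P v := by
  simp only [quadForm_eq_sum, hP, hw]
  refine Finset.sum_congr rfl fun j _ => Finset.sum_congr rfl fun k _ => ?_
  by_cases hj : S j <;> by_cases hk : S k <;> simp [hj, hk]

end QuadForm

section Hybrid

variable {d m : ℕ} (blk : Fin d → Fin m)

def hybrid (x y : EuclideanSpace ℝ (Fin d)) (i : Fin m) : EuclideanSpace ℝ (Fin d) :=
  WithLp.toLp 2 fun j => if blk j < i then x j else y j

lemma sub_hybrid_apply (x y : EuclideanSpace ℝ (Fin d)) (i : Fin m) (l : Fin d) :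
    (x - hybrid blk x y i) l = if i ≤ blk l then (x - y) l else 0 := by
  simp only [hybrid, PiLp.sub_apply]
  by_cases h : i ≤ blk l
  · simp [h, not_lt.2 h]
  · simp [h, lt_of_not_ge h]

end Hybrid

theorem stmt6_general {d m : ℕ} (blk : Fin d → Fin m)
    (F : EuclideanSpace ℝ (Fin d) → EuclideanSpace ℝ (Fin d))
    (Q : Fin m → Matrix (Fin d) (Fin d) ℝ)
    (hlip : ∀ (i : Fin m) (z w : EuclideanSpace ℝ (Fin d)),
      ∑ j ∈ Finset.univ.filter (fun j => blk j = i), (F z j - F w j) ^ 2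
        ≤ quadForm (Q i) (z - w))
    (Qhat : Fin m → Matrix (Fin d) (Fin d) ℝ)
    (hQhat : ∀ (i : Fin m) (j k : Fin d),
      Qhat i j k = if i ≤ blk j ∧ i ≤ blk k then Q i j k else 0)
    (L : ℝ) (hL2 : L ^ 2 = matOpNorm (∑ i, Qhat i))
    (x y p : EuclideanSpace ℝ (Fin d))
    (hp : ∀ j : Fin d,
      p j = F (WithLp.toLp 2 (fun j' => if blk j' < blk j then x j' else y j')) j) :
    ‖F x - p‖ ^ 2 ≤ L ^ 2 * ‖x - y‖ ^ 2 := by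
  have hblock : ∀ i, ∑ j ∈ Finset.univ.filter (fun j => blk j = i), (F x j - p j) ^ 2
      ≤ quadForm (Qhat i) (x - y) := by
    intro i
    rw [← quadForm_restrict (fun l => i ≤ blk l) (hQhat i) (sub_hybrid_apply blk x y i)]
    refine le_of_eq_of_le (Finset.sum_congr rfl fun j hj => ?_) (hlip i x (hybrid blk x y i))
    rw [hp j, (Finset.mem_filter.1 hj).2, hybrid]
  calc ‖F x - p‖ ^ 2
      = ∑ i, ∑ j ∈ Finset.univ.filter (fun j => blk j = i), (F x j - p j) ^ 2 := by
        rw [EuclideanSpace.real_norm_sq_eq, Finset.sum_fiberwise]; rfl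
    _ ≤ ∑ i, quadForm (Qhat i) (x - y) := Finset.sum_le_sum fun i _ => hblock i
    _ = quadForm (∑ i, Qhat i) (x - y) := (quadForm_sum _ _ _).symm
    _ ≤ L ^ 2 * ‖x - y‖ ^ 2 := hL2 ▸ quadForm_le_matOpNorm_mul_norm_sq _ _

/-- **Statement 6.** Let `F` satisfy the blockwise Lipschitz assumption with PSD
matrices `Q¹,…,Qᵐ` over the consecutive blocks (encoded by a monotone block map
`blk`), let `Q̂ⁱ` be `Qⁱ` with the rows/columns of the first `i−1` blocks zeroed,
and `L² = ‖∑ᵢ Q̂ⁱ‖`. If `p` is defined blockwise by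
`pⁱ = Fⁱ(x¹,…,x^{i−1}, yⁱ,…,yᵐ)` (hybrid vectors), then
`‖F(x) − p‖² ≤ L² ‖x − y‖²`. -/
theorem stmt6 {d m : ℕ} (blk : Fin d → Fin m) (hblk : Monotone blk)
    (F : EuclideanSpace ℝ (Fin d) → EuclideanSpace ℝ (Fin d))
    (Q : Fin m → Matrix (Fin d) (Fin d) ℝ)
    (hpsd : ∀ i, (Q i).PosSemidef)
    (hlip : ∀ (i : Fin m) (z w : EuclideanSpace ℝ (Fin d)),
      ∑ j ∈ Finset.univ.filter (fun j => blk j = i), (F z j - F w j) ^ 2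
        ≤ quadForm (Q i) (z - w))
    (Qhat : Fin m → Matrix (Fin d) (Fin d) ℝ)
    (hQhat : ∀ (i : Fin m) (j k : Fin d),
      Qhat i j k = if i ≤ blk j ∧ i ≤ blk k then Q i j k else 0)
    (L : ℝ) (hL2 : L ^ 2 = matOpNorm (∑ i, Qhat i))
    (x y p : EuclideanSpace ℝ (Fin d))
    (hp : ∀ j : Fin d,
      p j = F (WithLp.toLp 2 (fun j' => if blk j' < blk j then x j' else y j')) j) :
    ‖F x - p‖ ^ 2 ≤ L ^ 2 * ‖x - y‖ ^ 2 :=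
  stmt6_general blk F Q hlip Qhat hQhat L hL2 x y p hp
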